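/- If X is a star-Lindelöf space and X is the union of fewer than 𝔡 many Hurewicz subspaces, then X is star-Menger. -/
import Mathlib


open Set Filter Topology

/-- `𝒰` is an open cover of the space `X`. -/
def IsOpenCover {X : Type} [TopologicalSpace X] (𝒰 : Set (Set X)) : Prop :=
  (∀ u ∈ 𝒰, IsOpen u) ∧ ⋃₀ 𝒰 = Set.univ

/-- The star of a set `A` with respect to a collection `𝒰`. -/
def st {X : Type} (A : Set X) (𝒰 : Set (Set X)) : Set X :=
  ⋃₀ {u ∈ 𝒰 | (u ∩ A).Nonempty}
/-- Eventual domination `f ≤* g`. -/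
def EvLE (f g : ℕ → ℕ) : Prop := ∀ᶠ n in Filter.atTop, f n ≤ g n

/-- The dominating number `𝔡`. -/
noncomputable def dominatingNumber : Cardinal :=
  sInf {c | ∃ D : Set (ℕ → ℕ),
    (∀ g : ℕ → ℕ, ∃ f ∈ D, EvLE g f) ∧ Cardinal.mk D = c}

/-- The bounding number `𝔟`. -/
noncomputable def boundingNumber : Cardinal :=
  sInf {c | ∃ B : Set (ℕ → ℕ),
    (¬ ∃ g : ℕ → ℕ, ∀ f ∈ B, EvLE f g) ∧ Cardinal.mk B = c}
/-- The Menger property `S_fin(𝒪,𝒪)`. -/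
def MengerSpace (X : Type) [TopologicalSpace X] : Prop :=
  ∀ 𝒰 : ℕ → Set (Set X), (∀ n, IsOpenCover (𝒰 n)) →
    ∃ 𝒱 : ℕ → Set (Set X), (∀ n, (𝒱 n).Finite ∧ 𝒱 n ⊆ 𝒰 n) ∧
      ∀ x : X, ∃ n, x ∈ ⋃₀ 𝒱 n

/-- The Hurewicz property. -/
def HurewiczSpace (X : Type) [TopologicalSpace X] : Prop :=
  ∀ 𝒰 : ℕ → Set (Set X), (∀ n, IsOpenCover (𝒰 n)) →
    ∃ 𝒱 : ℕ → Set (Set X), (∀ n, (𝒱 n).Finite ∧ 𝒱 n ⊆ 𝒰 n) ∧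
      ∀ x : X, ∀ᶠ n in Filter.atTop, x ∈ ⋃₀ 𝒱 n

/-- The star-Menger property. -/
def StarMengerSpace (X : Type) [TopologicalSpace X] : Prop :=
  ∀ 𝒰 : ℕ → Set (Set X), (∀ n, IsOpenCover (𝒰 n)) →
    ∃ 𝒱 : ℕ → Set (Set X), (∀ n, (𝒱 n).Finite ∧ 𝒱 n ⊆ 𝒰 n) ∧
      ∀ x : X, ∃ n, x ∈ st (⋃₀ 𝒱 n) (𝒰 n)

/-- The star-Hurewicz property. -/
def StarHurewiczSpace (X : Type) [TopologicalSpace X] : Prop :=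
  ∀ 𝒰 : ℕ → Set (Set X), (∀ n, IsOpenCover (𝒰 n)) →
    ∃ 𝒱 : ℕ → Set (Set X), (∀ n, (𝒱 n).Finite ∧ 𝒱 n ⊆ 𝒰 n) ∧
      ∀ x : X, ∀ᶠ n in Filter.atTop, x ∈ st (⋃₀ 𝒱 n) (𝒰 n)

/-- The strongly star-Menger property. -/
def StronglyStarMengerSpace (X : Type) [TopologicalSpace X] : Prop :=
  ∀ 𝒰 : ℕ → Set (Set X), (∀ n, IsOpenCover (𝒰 n)) →
    ∃ F : ℕ → Set X, (∀ n, (F n).Finite) ∧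
      ∀ x : X, ∃ n, x ∈ st (F n) (𝒰 n)

/-- The strongly star-Hurewicz property. -/
def StronglyStarHurewiczSpace (X : Type) [TopologicalSpace X] : Prop :=
  ∀ 𝒰 : ℕ → Set (Set X), (∀ n, IsOpenCover (𝒰 n)) →
    ∃ F : ℕ → Set X, (∀ n, (F n).Finite) ∧
      ∀ x : X, ∀ᶠ n in Filter.atTop, x ∈ st (F n) (𝒰 n)

/-- The star-Lindelöf property. -/
def StarLindelofSpace (X : Type) [TopologicalSpace X] : Prop :=
  ∀ 𝒰 : Set (Set X), IsOpenCover 𝒰 →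
    ∃ 𝒱 ⊆ 𝒰, 𝒱.Countable ∧ st (⋃₀ 𝒱) 𝒰 = Set.univ

/-- The strongly star-Lindelöf property. -/
def StronglyStarLindelofSpace (X : Type) [TopologicalSpace X] : Prop :=
  ∀ 𝒰 : Set (Set X), IsOpenCover 𝒰 →
    ∃ C : Set X, C.Countable ∧ st C 𝒰 = Set.univ

lemma st_mono {X : Type} {A B : Set X} (h : A ⊆ B) (𝒰 : Set (Set X)) :
    st A 𝒰 ⊆ st B 𝒰 := by
  intro x hx
  obtain ⟨u, ⟨hu, z, hz1, hz2⟩, hxu⟩ := hx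
  exact ⟨u, ⟨hu, z, hz1, h hz2⟩, hxu⟩

lemma st_isOpen {X : Type} [TopologicalSpace X] (A : Set X) {𝒰 : Set (Set X)}
    (h : ∀ u ∈ 𝒰, IsOpen u) : IsOpen (st A 𝒰) :=
  isOpen_sUnion fun _ hu => h _ hu.1

theorem stmt (X : Type) [TopologicalSpace X] (hX : StarLindelofSpace X)
    (ι : Type) (Y : ι → Set X)
    (hcard : Cardinal.mk ι < dominatingNumber)
    (hY : ∀ i, HurewiczSpace (Y i))
    (hcover : ⋃ i, Y i = Set.univ) :
    StarMengerSpace X := by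
  classical
  intro 𝒰 h𝒰
  by_cases hne : Nonempty X
  swap
  · exact ⟨fun _ => ∅, fun n => ⟨Set.finite_empty, Set.empty_subset _⟩,
      fun x => absurd ⟨x⟩ hne⟩
  -- Star-Lindelöf gives countable enumerations
  have hSL : ∀ n, ∃ e : ℕ → Set X, (∀ j, e j ∈ 𝒰 n) ∧
      st (⋃ j, e j) (𝒰 n) = Set.univ := by
    intro n
    obtain ⟨𝒱, h𝒱sub, h𝒱c, h𝒱st⟩ := hX (𝒰 n) (h𝒰 n)
    have hVne : 𝒱.Nonempty := by
      rcases Set.eq_empty_or_nonempty 𝒱 with h | h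
      · exfalso
        obtain ⟨x⟩ := hne
        have hx : x ∈ st (⋃₀ 𝒱) (𝒰 n) := h𝒱st ▸ Set.mem_univ x
        obtain ⟨u, ⟨hu, z, _, hz⟩, _⟩ := hx
        simp [h] at hz
      · exact h
    obtain ⟨e, he⟩ := h𝒱c.exists_eq_range hVne
    refine ⟨e, fun j => h𝒱sub (he ▸ Set.mem_range_self j), ?_⟩
    rw [← Set.sUnion_range, ← he]; exact h𝒱st
  choose e he1 he2 using hSL
  -- the increasing open "stars"
  set G : ℕ → ℕ → Set X := fun n k => st (⋃ j ∈ Set.Iio k, e n j) (𝒰 n) with hG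
  have Gmono : ∀ n k k', k ≤ k' → G n k ⊆ G n k' := by
    intro n k k' hk
    exact st_mono (Set.biUnion_subset_biUnion_left fun j hj => lt_of_lt_of_le hj hk) _
  have Gcover : ∀ (n : ℕ) (x : X), ∃ k, x ∈ G n k := by
    intro n x
    have hx : x ∈ st (⋃ j, e n j) (𝒰 n) := (he2 n) ▸ Set.mem_univ x
    obtain ⟨u, ⟨hu, z, hzu, hz⟩, hxu⟩ := hx
    obtain ⟨j, hj⟩ := Set.mem_iUnion.mp hz
    exact ⟨j + 1, u, ⟨hu, z, hzu,
      Set.mem_biUnion (Set.mem_Iio.mpr (Nat.lt_succ_self j)) hj⟩, hxu⟩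
  have Gopen : ∀ n k, IsOpen (G n k) := fun n k => st_isOpen _ (h𝒰 n).1
  -- Hurewicz on each piece gives a function
  have hf : ∀ i, ∃ f : ℕ → ℕ, ∀ y : (Y i),
      ∀ᶠ n in Filter.atTop, (y : X) ∈ G n (f n) := by
    intro i
    set φ : ℕ → ℕ → Set (Y i) := fun n k => (Subtype.val) ⁻¹' G n k with hφ
    have hcov : ∀ n, IsOpenCover (Set.range (φ n)) := by
      intro n
      constructor
      · rintro u ⟨k, rfl⟩
        exact (Gopen n k).preimage continuous_subtype_val
      · ext y
        simp only [Set.sUnion_range, Set.mem_iUnion, Set.mem_univ, iff_true]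
        obtain ⟨k, hk⟩ := Gcover n (y : X)
        exact ⟨k, hk⟩
    obtain ⟨𝒱, h𝒱, hpt⟩ := hY i (fun n => Set.range (φ n)) hcov
    have hb : ∀ n, ∃ N, ⋃₀ 𝒱 n ⊆ φ n N := by
      intro n
      set c : Set (Y i) → ℕ := fun u =>
        if h : ∃ k, u = φ n k then h.choose else 0 with hc
      have hcspec : ∀ u ∈ 𝒱 n, u = φ n (c u) := by
        intro u hu
        obtain ⟨k, hk⟩ := (h𝒱 n).2 hu
        have hex : ∃ k, u = φ n k := ⟨k, hk.symm⟩
        simp only [hc, dif_pos hex]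
        exact hex.choose_spec
      obtain ⟨N, hN⟩ := ((h𝒱 n).1.image c).bddAbove
      refine ⟨N, ?_⟩
      rintro y ⟨u, hu, hy⟩
      have h1 : y ∈ φ n (c u) := (hcspec u hu) ▸ hy
      exact Set.preimage_mono (Gmono n (c u) N (hN ⟨u, hu, rfl⟩)) h1
    choose N hN using hb
    refine ⟨N, fun y => ?_⟩
    filter_upwards [hpt y] with n hn
    exact hN n hn
  choose f hf using hf
  -- fewer than 𝔡 functions don't dominate
  have hD : ∃ g : ℕ → ℕ, ∀ i, ¬ EvLE g (f i) := by
    by_contra hcon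
    push_neg at hcon
    have hmem : Cardinal.mk (Set.range f) ∈
        {c | ∃ D : Set (ℕ → ℕ), (∀ g : ℕ → ℕ, ∃ f' ∈ D, EvLE g f') ∧
          Cardinal.mk D = c} := by
      refine ⟨Set.range f, fun g => ?_, rfl⟩
      obtain ⟨i, hi⟩ := hcon g
      exact ⟨f i, Set.mem_range_self i, hi⟩
    have h1 : dominatingNumber ≤ Cardinal.mk (Set.range f) :=
      csInf_le (OrderBot.bddBelow _) hmem
    exact absurd (lt_of_le_of_lt (h1.trans Cardinal.mk_range_le) hcard)
      (lt_irrefl _)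
  obtain ⟨g, hg⟩ := hD
  -- the final finite selections
  refine ⟨fun n => e n '' Set.Iio (g n),
    fun n => ⟨(Set.finite_Iio _).image _, ?_⟩, ?_⟩
  · rintro u ⟨j, _, rfl⟩; exact he1 n j
  · intro x
    have hx : x ∈ ⋃ i, Y i := hcover ▸ Set.mem_univ x
    obtain ⟨i, hi⟩ := Set.mem_iUnion.mp hx
    have hfreq : ∃ᶠ n in Filter.atTop, f i n < g n := by
      have := hg i
      rw [EvLE, Filter.not_eventually] at this
      exact this.mono fun n hn => Nat.lt_of_not_le hn
    obtain ⟨n, hlt, hmem⟩ := (hfreq.and_eventually (hf i ⟨x, hi⟩)).exists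
    refine ⟨n, ?_⟩
    have hsub : G n (f i n) ⊆ st (⋃₀ (e n '' Set.Iio (g n))) (𝒰 n) := by
      rw [Set.sUnion_image]
      exact st_mono
        (Set.biUnion_subset_biUnion_left fun j hj => lt_trans hj hlt) _
    exact hsub hmem
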